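/- (One-shot Slepian-Wolf coding, converse part.) For any ε ∈ [0,1), any Slepian-Wolf code (φ,ψ) with error probability ε(C) ≤ ε, and any δ > 0, there exists a family (ε_x)_{x∈𝒳} with ε_x ∈ [0,1] for every x such that Σ_{x∈𝒳} P_X(x)·ε_x ≤ ε + 2^{−δ} and ℓ(x) ≥ h̄^{ε_x}(x) − δ for every x ∈ 𝒳. -/

import Mathlib

open Filter Topology

noncomputable section

/-- A joint probability mass function on `X × Y` (all information quantities are base 2),
with everywhere-positive marginals. -/
structure JointPMF (X Y : Type) where
  p : X → Y → ℝ
  nonneg : ∀ x y, 0 ≤ p x y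
  hasSum_one : HasSum (fun z : X × Y => p z.1 z.2) 1
  margX_pos : ∀ x, 0 < ∑' y, p x y
  margY_pos : ∀ y, 0 < ∑' x, p x y

namespace JointPMF

variable {X Y : Type}

/-- marginal `P_X` -/
def pX (P : JointPMF X Y) (x : X) : ℝ := ∑' y, P.p x y

/-- marginal `P_Y` -/
def pY (P : JointPMF X Y) (y : Y) : ℝ := ∑' x, P.p x y

/-- conditional probability `P_{X|Y}(x|y)` -/
def condXY (P : JointPMF X Y) (x : X) (y : Y) : ℝ := P.p x y / P.pY y

/-- conditional probability `P_{Y|X}(y|x)` -/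
def condYX (P : JointPMF X Y) (x : X) (y : Y) : ℝ := P.p x y / P.pX x

/-- probability of a set of pairs -/
def prob (P : JointPMF X Y) (A : Set (X × Y)) : ℝ :=
  ∑' z : X × Y, A.indicator (fun z => P.p z.1 z.2) z

/-- probability of a set of `x`'s under the marginal `P_X` -/
def probX (P : JointPMF X Y) (A : Set X) : ℝ :=
  ∑' x : X, A.indicator (fun x => P.pX x) x

/-- conditional self-information `log₂(1/P_{X|Y}(x|y))` -/
def iXY (P : JointPMF X Y) (x : X) (y : Y) : ℝ := Real.logb 2 (1 / P.condXY x y)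

/-- `Q^A(x,y) = P_{XY}(x,y)·1[(x,y)∈A]/P_{XY}(A)` -/
def QA (P : JointPMF X Y) (A : Set (X × Y)) (z : X × Y) : ℝ :=
  A.indicator (fun z => P.p z.1 z.2) z / P.prob A

/-- `Q^A_Y(y) = Σ_x Q^A(x,y)` -/
def QAY (P : JointPMF X Y) (A : Set (X × Y)) (y : Y) : ℝ := ∑' x, P.QA A (x, y)

/-- `H_A(X|Y) = Σ_{(x,y)∈A} Q^A(x,y) log₂(Q^A_Y(y)/Q^A(x,y))` -/
def HA (P : JointPMF X Y) (A : Set (X × Y)) : ℝ :=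
  ∑' z : X × Y, A.indicator (fun z => P.QA A z * Real.logb 2 (P.QAY A z.2 / P.QA A z)) z

/-- `He^ε(X|Y)`: infimum of `P(A)·H_A(X|Y)` over `A` with `P(A) ≥ 1−ε`. -/
def He (P : JointPMF X Y) (ε : ℝ) : ℝ :=
  sInf {v : ℝ | ∃ A : Set (X × Y), 1 - ε ≤ P.prob A ∧ v = P.prob A * P.HA A}

/-- `Σ_{(x,y)∈A} P_{XY}(x,y) log₂(1/P_{X|Y}(x|y))` -/
def infoSum (P : JointPMF X Y) (A : Set (X × Y)) : ℝ :=
  ∑' z : X × Y, A.indicator (fun z => P.p z.1 z.2 * P.iXY z.1 z.2) z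

/-- `tHe^ε(X|Y)` -/
def tHe (P : JointPMF X Y) (ε : ℝ) : ℝ :=
  sInf {v : ℝ | ∃ A : Set (X × Y), 1 - ε ≤ P.prob A ∧ v = P.infoSum A}

/-- Shannon conditional entropy `H(X|Y)` -/
def condEnt (P : JointPMF X Y) : ℝ :=
  ∑' z : X × Y, P.p z.1 z.2 * P.iXY z.1 z.2

/-- `Pr{ log₂(1/P_{X|Y}(x|Y)) > R | X = x }` -/
def tailProb (P : JointPMF X Y) (x : X) (R : ℝ) : ℝ :=
  ∑' y : Y, {y : Y | R < P.iXY x y}.indicator (fun y => P.condYX x y) y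

/-- `h̄^ε(x)` (real-valued version) -/
def hbar (P : JointPMF X Y) (ε : ℝ) (x : X) : ℝ :=
  sInf {R : ℝ | P.tailProb x R ≤ ε}

/-- `h̄^ε(x)` (extended-real-valued version) -/
def hbarE (P : JointPMF X Y) (ε : ℝ) (x : X) : EReal :=
  sInf {R : EReal | ∃ r : ℝ, R = (r : EReal) ∧ P.tailProb x r ≤ ε}

/-- `H̄_s^ε(X|Y) = Σ_x P_X(x)·h̄^ε(x)` -/
def HsEps (P : JointPMF X Y) (ε : ℝ) : ℝ := ∑' x, P.pX x * P.hbar ε x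

end JointPMF

/-- Partial sum `Σ_{i<k} P(e i) log₂(1/P_{X|Y}(e i))` along an enumeration `e`. -/
def hHeSum {X Y : Type} (P : JointPMF X Y) (e : ℕ → X × Y) (k : ℕ) : ℝ :=
  ∑ i ∈ Finset.range k, P.p (e i).1 (e i).2 * P.iXY (e i).1 (e i).2

/-- A variable-length code with common side-information: for each `y` the set of codewords
`{enc x y : x}` satisfies the prefix condition (no codeword is a proper prefix of another). -/
structure CSICode (X Y : Type) where
  enc : X → Y → List Bool
  dec : List Bool → Y → X
  prefixFree : ∀ (y : Y) (x x' : X), (enc x y) <+: (enc x' y) → enc x y = enc x' y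

namespace CSICode

variable {X Y : Type}

/-- error probability `Pr{ψ(φ(X|Y),Y) ≠ X}` -/
def err (C : CSICode X Y) (P : JointPMF X Y) : ℝ :=
  P.prob {z | C.dec (C.enc z.1 z.2) z.2 ≠ z.1}

/-- average codeword length `E[ℓ(X|Y)]` -/
def avgLen (C : CSICode X Y) (P : JointPMF X Y) : ℝ :=
  ∑' z : X × Y, P.p z.1 z.2 * ((C.enc z.1 z.2).length : ℝ)

end CSICode

/-- A Slepian-Wolf code: prefix-free encoder of `x` alone, decoder with side information. -/
structure SWCode (X Y : Type) where
  enc : X → List Bool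
  dec : List Bool → Y → X
  prefixFree : ∀ x x', (enc x) <+: (enc x') → enc x = enc x'

namespace SWCode

variable {X Y : Type}

/-- error probability `Pr{ψ(φ(X),Y) ≠ X}` -/
def err (C : SWCode X Y) (P : JointPMF X Y) : ℝ :=
  P.prob {z | C.dec (C.enc z.1) z.2 ≠ z.1}

/-- codeword length `ℓ(x)` -/
def len (C : SWCode X Y) (x : X) : ℕ := (C.enc x).length

/-- average codeword length `E[ℓ(X)]` -/
def avgLen (C : SWCode X Y) (P : JointPMF X Y) : ℝ :=
  ∑' x : X, P.pX x * ((C.enc x).length : ℝ)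

end SWCode

/-- A general correlated source: for each blocklength `n`, a joint pmf on `𝒳ⁿ × 𝒴ⁿ`. -/
abbrev Source (X Y : Type) : Type := (n : ℕ) → JointPMF (Fin n → X) (Fin n → Y)

section Sources

variable {X Y : Type}

/-- normalized conditional self-information `Zₙ = (1/n) log₂(1/P_{Xⁿ|Yⁿ})` -/
def nInfo (S : Source X Y) (n : ℕ) (z : (Fin n → X) × (Fin n → Y)) : ℝ :=
  (1/(n:ℝ)) * (S n).iXY z.1 z.2

/-- uniform integrability: `lim_{u→∞} sup_n E[Zₙ·1{Zₙ ≥ u}] = 0` -/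
def UniformlyIntegrable (S : Source X Y) : Prop :=
  ∀ δ > (0:ℝ), ∃ u₀ : ℝ, ∀ u ≥ u₀, ∀ n : ℕ,
    (∑' z : (Fin n → X) × (Fin n → Y),
      {z | u ≤ nInfo S n z}.indicator (fun z => (S n).p z.1 z.2 * nInfo S n z) z) ≤ δ

/-- spectral conditional sup-entropy rate `H̄(X|Y) = p-limsup Zₙ` -/
def specCondSup (S : Source X Y) : ℝ :=
  sInf {α : ℝ | Tendsto (fun n : ℕ => (S n).prob {z | α < nInfo S n z}) atTop (𝓝 0)}

/-- spectral conditional inf-entropy rate `H̲(X|Y) = p-liminf Zₙ` -/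
def specCondInf (S : Source X Y) : ℝ :=
  sSup {β : ℝ | Tendsto (fun n : ℕ => (S n).prob {z | nInfo S n z < β}) atTop (𝓝 0)}

/-- spectral inf-divergence rate `D̲(X₁‖X₂)` between the marginal processes -/
def specInfDiv (S1 S2 : Source X Y) : ℝ :=
  sSup {β : ℝ | Tendsto (fun n : ℕ =>
    (S1 n).probX {x | (1/(n:ℝ)) * Real.logb 2 ((S1 n).pX x / (S2 n).pX x) < β})
    atTop (𝓝 0)}

/-- optimal rate achievable by ε-coding with common side-information -/
def RcomEps (S : Source X Y) (ε : ℝ) : ℝ :=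
  sInf {R : ℝ | ∃ C : (n : ℕ) → CSICode (Fin n → X) (Fin n → Y),
    limsup (fun n : ℕ => (C n).err (S n)) atTop ≤ ε ∧
    limsup (fun n : ℕ => (1/(n:ℝ)) * (C n).avgLen (S n)) atTop ≤ R}

/-- optimal rate achievable by ε-Slepian-Wolf coding -/
def RSWeps (S : Source X Y) (ε : ℝ) : ℝ :=
  sInf {R : ℝ | ∃ C : (n : ℕ) → SWCode (Fin n → X) (Fin n → Y),
    limsup (fun n : ℕ => (C n).err (S n)) atTop ≤ ε ∧
    limsup (fun n : ℕ => (1/(n:ℝ)) * (C n).avgLen (S n)) atTop ≤ R}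

/-- optimal rate achievable by weakly lossless Slepian-Wolf coding -/
def RSW (S : Source X Y) : ℝ :=
  sInf {R : ℝ | ∃ C : (n : ℕ) → SWCode (Fin n → X) (Fin n → Y),
    Tendsto (fun n : ℕ => (C n).err (S n)) atTop (𝓝 0) ∧
    limsup (fun n : ℕ => (1/(n:ℝ)) * (C n).avgLen (S n)) atTop ≤ R}

/-- `H̄_s(X|Y) = lim_{ε↓0} limsup_n (1/n) H̄_s^ε(Xⁿ|Yⁿ)`. Since the inner quantity is
nonincreasing in `ε`, the right limit at `0` equals the supremum over `ε > 0`. -/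
def Hs (S : Source X Y) : ℝ :=
  ⨆ ε ∈ Set.Ioi (0:ℝ), limsup (fun n : ℕ => (1/(n:ℝ)) * (S n).HsEps ε) atTop

/-- `(X,Y)` is the mixture of `(X₁,Y₁)` and `(X₂,Y₂)` with weights `α₁, α₂`. -/
def IsMixture2 (S S1 S2 : Source X Y) (α1 α2 : ℝ) : Prop :=
  ∀ n x y, (S n).p x y = α1 * (S1 n).p x y + α2 * (S2 n).p x y

end Sources

/-! Take `ε_x` to be the conditional probability, given `X = x`, that `log(1/P_{X|Y}(x|Y))`
exceeds `ℓ(x) + δ`; then `h̄^{ε_x}(x) ≤ ℓ(x) + δ` by definition, and `Σ_x P_X(x) ε_x` is the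
probability of the event `log(1/P_{X|Y}(X|Y)) > ℓ(X) + δ`. On that event, whenever decoding
succeeds, `P_{XY}(x,y) < 2^{-ℓ(x)-δ} P_Y(y)`. For fixed `y` the correctly decoded `x` have
distinct codewords, which form a prefix-free set, so Kraft's inequality bounds
`Σ_x 2^{-ℓ(x)}` over them by `1`; summing over `y`, the event has probability at most
`ε(C) + 2^{-δ}`. -/

section PrefixCodes

variable {α : Type*}

def PrefixFree (S : Set (List α)) : Prop :=
  ∀ w ∈ S, ∀ w' ∈ S, w <+: w' → w = w'

theorem PrefixFree.uniquelyDecodable {S : Set (List α)} (hS : PrefixFree S) (hnil : [] ∉ S) :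
    InformationTheory.UniquelyDecodable S := by
  intro L₁ L₂ h₁ h₂ hflat
  induction L₁ generalizing L₂ with
  | nil =>
    cases L₂ with
    | nil => rfl
    | cons w L₂ =>
      have hw : w = [] := List.append_eq_nil_iff.1 hflat.symm |>.1
      exact absurd (hw ▸ h₂ w List.mem_cons_self) hnil
  | cons w L₁ ih =>
    cases L₂ with
    | nil =>
      have hw : w = [] := List.append_eq_nil_iff.1 hflat |>.1
      exact absurd (hw ▸ h₁ w List.mem_cons_self) hnil
    | cons w' L₂ =>
      simp only [List.flatten_cons] at hflat
      have hw₁ := h₁ w List.mem_cons_self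
      have hw₂ := h₂ w' List.mem_cons_self
      have hww' : w = w' := by
        rcases List.prefix_or_prefix_of_prefix (List.prefix_append w _)
            (hflat ▸ List.prefix_append w' _) with h | h
        · exact hS w hw₁ w' hw₂ h
        · exact (hS w' hw₂ w hw₁ h).symm
      subst hww'
      rw [ih L₂ (fun v hv => h₁ v (List.mem_cons_of_mem _ hv))
        (fun v hv => h₂ v (List.mem_cons_of_mem _ hv)) (List.append_cancel_left hflat)]

theorem PrefixFree.sum_le_one [Fintype α] [Nonempty α] {S : Finset (List α)}
    (hS : PrefixFree (S : Set (List α))) :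
    ∑ w ∈ S, (1 / Fintype.card α : ℝ) ^ w.length ≤ 1 := by
  by_cases hnil : [] ∈ S
  · -- `{[]}` is prefix-free but not uniquely decodable.
    have : S = {[]} := Finset.eq_singleton_iff_unique_mem.2
      ⟨hnil, fun w hw => (hS [] hnil w hw List.nil_prefix).symm⟩
    simp [this]
  · exact InformationTheory.kraft_mcmillan_inequality
      (hS.uniquelyDecodable (by simpa using hnil))

end PrefixCodes

namespace JointPMF

variable {X Y : Type} (P : JointPMF X Y)

theorem summable_p : Summable fun z : X × Y => P.p z.1 z.2 :=
  P.hasSum_one.summable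

theorem pX_pos (x : X) : 0 < P.pX x := P.margX_pos x

theorem pY_pos (y : Y) : 0 < P.pY y := P.margY_pos y

theorem hasSum_pY : HasSum P.pY 1 := by
  have h := (Equiv.prodComm Y X).hasSum_iff.2 P.hasSum_one
  exact h.prod_fiberwise fun y => (h.summable.prod_factor y).hasSum

theorem sum_pY_le_one (T : Finset Y) : ∑ y ∈ T, P.pY y ≤ 1 :=
  sum_le_hasSum T (fun y _ => (P.pY_pos y).le) P.hasSum_pY

theorem prob_mono {A B : Set (X × Y)} (h : A ⊆ B) : P.prob A ≤ P.prob B :=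
  (P.summable_p.indicator A).tsum_le_tsum
    (Set.indicator_le_indicator_of_subset h fun z => P.nonneg z.1 z.2)
    (P.summable_p.indicator B)

theorem prob_union_le (A B : Set (X × Y)) : P.prob (A ∪ B) ≤ P.prob A + P.prob B := by
  rw [prob, prob, prob, ← (P.summable_p.indicator A).tsum_add (P.summable_p.indicator B)]
  refine (P.summable_p.indicator _).tsum_le_tsum (fun z => ?_)
    ((P.summable_p.indicator A).add (P.summable_p.indicator B))
  rw [← Set.indicator_union_add_inter_apply]
  exact le_add_of_nonneg_right (Set.indicator_nonneg (fun z _ => P.nonneg z.1 z.2) z)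

theorem tsum_le_of_sum_fiber_le {f : X × Y → ℝ} (hf : ∀ z, 0 ≤ f z) {c : ℝ} (hc : 0 ≤ c)
    (h : ∀ y (S : Finset X), ∑ x ∈ S, f (x, y) ≤ c * P.pY y) : ∑' z, f z ≤ c := by
  classical
  refine tsum_le_of_sum_le' hc fun F => ?_
  calc ∑ z ∈ F, f z ≤ ∑ z ∈ F.image Prod.fst ×ˢ F.image Prod.snd, f z :=
        Finset.sum_le_sum_of_subset_of_nonneg
          (fun z hz => Finset.mem_product.2 ⟨Finset.mem_image_of_mem _ hz,
            Finset.mem_image_of_mem _ hz⟩)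
          fun z _ _ => hf z
    _ = ∑ y ∈ F.image Prod.snd, ∑ x ∈ F.image Prod.fst, f (x, y) := Finset.sum_product_right ..
    _ ≤ ∑ y ∈ F.image Prod.snd, c * P.pY y := Finset.sum_le_sum fun y _ => h y _
    _ = c * ∑ y ∈ F.image Prod.snd, P.pY y := (Finset.mul_sum ..).symm
    _ ≤ c * 1 := by gcongr; exact P.sum_pY_le_one _
    _ = c := mul_one c

theorem condYX_nonneg (x : X) (y : Y) : 0 ≤ P.condYX x y :=
  div_nonneg (P.nonneg x y) (P.pX_pos x).le

theorem hasSum_condYX (x : X) : HasSum (P.condYX x) 1 := by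
  have h : HasSum (fun y => P.p x y / P.pX x) (P.pX x / P.pX x) :=
    (P.summable_p.prod_factor x).hasSum.div_const _
  rwa [div_self (P.pX_pos x).ne'] at h

theorem tailProb_mem_Icc (x : X) (R : ℝ) : P.tailProb x R ∈ Set.Icc 0 1 := by
  have hs := (P.hasSum_condYX x).summable
  refine ⟨tsum_nonneg fun y => Set.indicator_nonneg (fun y _ => P.condYX_nonneg x y) y, ?_⟩
  calc P.tailProb x R ≤ ∑' y, P.condYX x y :=
        (hs.indicator _).tsum_le_tsum
          (fun y => Set.indicator_le_self' (fun y _ => P.condYX_nonneg x y) y) hs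
    _ = 1 := (P.hasSum_condYX x).tsum_eq

theorem tsum_pX_mul_tailProb (R : X → ℝ) :
    ∑' x, P.pX x * P.tailProb x (R x) = P.prob {z | R z.1 < P.iXY z.1 z.2} := by
  set A : Set (X × Y) := {z | R z.1 < P.iXY z.1 z.2}
  have hA := P.summable_p.indicator A
  have hfiber : ∀ x,
      P.pX x * P.tailProb x (R x) = ∑' y, A.indicator (fun z => P.p z.1 z.2) (x, y) := by
    intro x
    rw [tailProb, ← tsum_mul_left]
    refine tsum_congr fun y => ?_
    by_cases hxy : R x < P.iXY x y
    · rw [Set.indicator_of_mem (show y ∈ {y | R x < P.iXY x y} from hxy),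
        Set.indicator_of_mem (show (x, y) ∈ A from hxy)]
      exact mul_div_cancel₀ _ (P.pX_pos x).ne'
    · rw [Set.indicator_of_notMem (show y ∉ {y | R x < P.iXY x y} from hxy),
        Set.indicator_of_notMem (show (x, y) ∉ A from hxy), mul_zero]
  simp_rw [hfiber]
  exact (hA.hasSum.prod_fiberwise fun x => (hA.prod_factor x).hasSum).tsum_eq

theorem p_le_rpow_mul_pY_of_lt_iXY {x : X} {y : Y} {R : ℝ} (h : R < P.iXY x y) :
    P.p x y ≤ 2 ^ (-R) * P.pY y := by
  have hY := P.pY_pos y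
  rcases (P.nonneg x y).eq_or_lt with h0 | hpos
  · rw [← h0]
    exact mul_nonneg (Real.rpow_nonneg zero_le_two _) hY.le
  have hcond : P.condXY x y < 2 ^ (-R) := by
    have hlog : Real.logb 2 (P.condXY x y) < -R := by
      rw [iXY, one_div, Real.logb_inv] at h
      linarith
    exact (Real.logb_lt_iff_lt_rpow one_lt_two (div_pos hpos hY)).1 hlog
  calc P.p x y = P.condXY x y * P.pY y := (div_mul_cancel₀ _ hY.ne').symm
    _ ≤ 2 ^ (-R) * P.pY y := mul_le_mul_of_nonneg_right hcond.le hY.le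

theorem hbarE_tailProb_le (x : X) (r : ℝ) : P.hbarE (P.tailProb x r) x ≤ r :=
  sInf_le ⟨r, rfl, le_rfl⟩

end JointPMF

namespace SWCode

variable {X Y : Type} (C : SWCode X Y)

open Classical in
theorem sum_decodable_le_one (y : Y) (S : Finset X) :
    ∑ x ∈ S with C.dec (C.enc x) y = x, (1 / 2 : ℝ) ^ C.len x ≤ 1 := by
  set S' := S.filter fun x => C.dec (C.enc x) y = x
  have hinj : Set.InjOn C.enc S' := fun a ha b hb hab => by
    rw [← (Finset.mem_filter.1 ha).2, ← (Finset.mem_filter.1 hb).2, hab]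
  have hpf : PrefixFree ((S'.image C.enc : Finset (List Bool)) : Set (List Bool)) := by
    rw [Finset.coe_image]
    rintro _ ⟨a, -, rfl⟩ _ ⟨b, -, rfl⟩ h
    exact C.prefixFree a b h
  simpa [Finset.sum_image hinj, len] using hpf.sum_le_one

theorem prob_decodable_lt_iXY_le (P : JointPMF X Y) (δ : ℝ) :
    P.prob {z | C.dec (C.enc z.1) z.2 = z.1 ∧ (C.len z.1 : ℝ) + δ < P.iXY z.1 z.2} ≤
      2 ^ (-δ) := by
  classical
  refine P.tsum_le_of_sum_fiber_le (fun z => Set.indicator_nonneg (fun z _ => P.nonneg _ _) z)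
    (Real.rpow_nonneg zero_le_two _) fun y S => ?_
  have hw : 0 ≤ (2 : ℝ) ^ (-δ) * P.pY y :=
    mul_nonneg (Real.rpow_nonneg zero_le_two _) (P.pY_pos y).le
  calc _ ≤ ∑ x ∈ S with C.dec (C.enc x) y = x, 2 ^ (-δ) * P.pY y * (1 / 2 : ℝ) ^ C.len x := by
        rw [Finset.sum_filter]
        refine Finset.sum_le_sum fun x _ =>
          Set.indicator_apply_le' (fun ⟨hdec, hlarge⟩ => ?_) fun _ => ?_
        · rw [if_pos hdec]
          calc P.p x y ≤ 2 ^ (-((C.len x : ℝ) + δ)) * P.pY y :=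
                P.p_le_rpow_mul_pY_of_lt_iXY hlarge
            _ = _ := by
              rw [neg_add, Real.rpow_add two_pos, Real.rpow_neg zero_le_two, Real.rpow_natCast,
                one_div_pow]
              ring
        · split_ifs
          · exact mul_nonneg hw (by positivity)
          · exact le_rfl
    _ = 2 ^ (-δ) * P.pY y * ∑ x ∈ S with C.dec (C.enc x) y = x, (1 / 2 : ℝ) ^ C.len x :=
        (Finset.mul_sum ..).symm
    _ ≤ 2 ^ (-δ) * P.pY y * 1 := mul_le_mul_of_nonneg_left (C.sum_decodable_le_one y S) hw
    _ = 2 ^ (-δ) * P.pY y := mul_one _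

theorem prob_lt_iXY_le_err_add (P : JointPMF X Y) (δ : ℝ) :
    P.prob {z | (C.len z.1 : ℝ) + δ < P.iXY z.1 z.2} ≤ C.err P + 2 ^ (-δ) :=
  calc _ ≤ P.prob ({z | C.dec (C.enc z.1) z.2 ≠ z.1} ∪
          {z | C.dec (C.enc z.1) z.2 = z.1 ∧ (C.len z.1 : ℝ) + δ < P.iXY z.1 z.2}) :=
        P.prob_mono fun z hz => (em (C.dec (C.enc z.1) z.2 = z.1)).elim
          (fun h => Or.inr ⟨h, hz⟩) Or.inl
    _ ≤ C.err P + _ := P.prob_union_le _ _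
    _ ≤ C.err P + 2 ^ (-δ) := by grw [C.prob_decodable_lt_iXY_le P δ]

end SWCode

theorem one_shot_SW_converse_general {X Y : Type}
    (P : JointPMF X Y) (ε : ℝ)
    (C : SWCode X Y) (herr : C.err P ≤ ε) (δ : ℝ) :
    ∃ εf : X → ℝ, (∀ x, εf x ∈ Set.Icc (0:ℝ) 1) ∧
      (∑' x, P.pX x * εf x) ≤ ε + (2:ℝ) ^ (-δ) ∧
      ∀ x : X, P.hbarE (εf x) x - ((δ : ℝ) : EReal) ≤ ((C.len x : ℝ) : EReal) := by
  refine ⟨fun x => P.tailProb x (C.len x + δ), fun x => P.tailProb_mem_Icc x _, ?_, fun x => ?_⟩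
  · rw [P.tsum_pX_mul_tailProb fun x => (C.len x : ℝ) + δ]
    linarith [C.prob_lt_iXY_le_err_add P δ]
  · rw [EReal.sub_le_iff_le_add (.inl (EReal.coe_ne_bot δ)) (.inl (EReal.coe_ne_top δ)),
      ← EReal.coe_add]
    exact P.hbarE_tailProb_le x _

/-- One-shot Slepian-Wolf coding, converse part. -/
theorem one_shot_SW_converse {X Y : Type} [Countable X] [Countable Y]
    (P : JointPMF X Y) (ε : ℝ) (hε : ε ∈ Set.Ico (0:ℝ) 1)
    (C : SWCode X Y) (herr : C.err P ≤ ε) (δ : ℝ) (hδ : 0 < δ) :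
    ∃ εf : X → ℝ, (∀ x, εf x ∈ Set.Icc (0:ℝ) 1) ∧
      (∑' x, P.pX x * εf x) ≤ ε + (2:ℝ) ^ (-δ) ∧
      ∀ x : X, P.hbarE (εf x) x - ((δ : ℝ) : EReal) ≤ ((C.len x : ℝ) : EReal) :=
  one_shot_SW_converse_general P ε C herr δ
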